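/- arXiv:2507.14472 — 10 statements merged into one kernel-verified Lean document; each statement's English description precedes it below -/
import Mathlib

section
/- Every ID-MON allocation rule is network-implementable: given an ID-MON allocation f with finite critical bids, the payment rule defined by winning payment p̃(r) = v*(∅) and losing payment p̄(r) = v*(∅) − v*(r) makes the mechanism individually rational and strategyproof, i.e., for every true type (v,r), every misreport v' and every r' ⊆ r, the utility u(v,r) = f(v,r)·v − [f(v,r)·p̃(r) + (1−f(v,r))·p̄(r)] satisfies u(v,r) ≥ u(v',r') and u(v,r') ≥ 0 for all r' ⊆ r. -/
/-- Every ID-MON allocation rule (with finite nonnegative critical bids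
`vstar`, and `f v r = 1` iff `v ≥ vstar r`) is network-implementable via the payment
rule with winning payment `vstar ∅` and losing payment `vstar ∅ - vstar r'`:
the resulting mechanism is strategyproof (truthful reporting `(v, r)` dominates any
report `(v', r')` with `r' ⊆ r`) and individually rational (truthful bidding yields
nonnegative utility for every invitation report `r' ⊆ r`). -/
theorem id_mon_network_implementable {α : Type*}
    (f : ℝ → Finset α → ℝ) (vstar : Finset α → ℝ)
    (h0 : ∀ r : Finset α, 0 ≤ vstar r)
    (hID : ∀ (v v' : ℝ) (r r' : Finset α), f v r = 1 → v ≤ v' → r' ⊆ r → f v' r' = 1)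
    (hf : ∀ (v : ℝ) (r : Finset α), f v r = if vstar r ≤ v then 1 else 0)
    (u : ℝ → ℝ → Finset α → ℝ)
    (hu : ∀ (v v' : ℝ) (r' : Finset α),
      u v v' r' = f v' r' * v -
        (f v' r' * vstar ∅ + (1 - f v' r') * (vstar ∅ - vstar r')))
    (v : ℝ) (hv : 0 ≤ v) (r : Finset α) :
    (∀ (v' : ℝ) (r' : Finset α), r' ⊆ r → u v v' r' ≤ u v v r) ∧
      (∀ r' : Finset α, r' ⊆ r → 0 ≤ u v v r') := by
  have mono : ∀ a b : Finset α, a ⊆ b → vstar a ≤ vstar b := by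
    intro a b hs
    have h1 : f (vstar b) b = 1 := by rw [hf]; simp
    have h2 : f (vstar b) a = 1 := hID _ _ _ _ h1 le_rfl hs
    rw [hf] at h2
    by_contra h
    rw [if_neg h] at h2
    norm_num at h2
  constructor
  · intro v' r' hs
    have hm := mono r' r hs
    rw [hu, hu, hf, hf]
    split_ifs <;> nlinarith
  · intro r' hs
    have hm := mono ∅ r' (Finset.empty_subset r')
    rw [hu, hf]
    split_ifs <;> nlinarith
end

section
/- Every IP-MON allocation rule is network-implementable: given an IP-MON allocation f, the payment rule with winning payment p̃(r) = v*(r) and losing payment p̄(r) = 0 makes the mechanism individually rational and strategyproof (truthfully reporting valuation and the full invitation set dominates any report (v', r') with r' ⊆ r). -/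
/-- Every IP-MON allocation rule (with finite nonnegative critical bids
`vstar`, and `f v r = 1` iff `v ≥ vstar r`) is network-implementable via the payment
rule with winning payment `vstar r'` and losing payment `0`: the mechanism is
strategyproof (truthful reporting `(v, r)` dominates any `(v', r')` with `r' ⊆ r`)
and individually rational (truthful bidding yields nonnegative utility). -/
theorem ip_mon_network_implementable {α : Type*}
    (f : ℝ → Finset α → ℝ) (vstar : Finset α → ℝ)
    (h0 : ∀ r : Finset α, 0 ≤ vstar r)
    (hIP : ∀ (v v' : ℝ) (r r' : Finset α), f v r = 1 → v ≤ v' → r ⊆ r' → f v' r' = 1)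
    (hf : ∀ (v : ℝ) (r : Finset α), f v r = if vstar r ≤ v then 1 else 0)
    (u : ℝ → ℝ → Finset α → ℝ)
    (hu : ∀ (v v' : ℝ) (r' : Finset α),
      u v v' r' = f v' r' * v - (f v' r' * vstar r' + (1 - f v' r') * 0))
    (v : ℝ) (hv : 0 ≤ v) (r : Finset α) :
    (∀ (v' : ℝ) (r' : Finset α), r' ⊆ r → u v v' r' ≤ u v v r) ∧
      (∀ r' : Finset α, r' ⊆ r → 0 ≤ u v v r') := by
  -- vstar is antitone on supersets
  have hmono : ∀ r' : Finset α, r' ⊆ r → vstar r ≤ vstar r' := by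
    intro r' hsub
    have h1 : f (vstar r') r' = 1 := by rw [hf]; simp
    have h2 : f (vstar r') r = 1 := hIP _ _ _ _ h1 le_rfl hsub
    rw [hf] at h2
    by_contra h
    rw [if_neg (by linarith)] at h2
    norm_num at h2
  have hutru : ∀ r' : Finset α, u v v r' = if vstar r' ≤ v then v - vstar r' else 0 := by
    intro r'
    rw [hu, hf]
    split <;> ring
  have hIR : ∀ r' : Finset α, 0 ≤ u v v r' := by
    intro r'
    rw [hutru]
    split <;> linarith
  constructor
  · intro v' r' hsub
    have hm := hmono r' hsub
    rw [hu, hf, hutru]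
    by_cases h1 : vstar r' ≤ v'
    · rw [if_pos h1]
      by_cases h2 : vstar r ≤ v
      · rw [if_pos h2]; linarith
      · rw [if_neg h2]; linarith
    · rw [if_neg h1]
      have := hIR r
      rw [hutru] at this
      split <;> linarith
  · intro r' _; exact hIR r'
end

section
/- For an ID-MON allocation f, the payment rule p̃(r)=v*(∅), p̄(r)=v*(∅)−v*(r) is revenue-maximizing among all IR and SP payment rules: for any bid-independent, invitationally-monotone payments (p̃', p̄') satisfying p̃'(r)−p̄'(r)=v*(r) for all r and p̄'(∅) ≤ 0, it holds pointwise that p̄'(r) ≤ v*(∅) − v*(r) and p̃'(r) ≤ v*(∅). -/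
/-- For an ID-MON allocation (critical bids `vstar` nondecreasing in the
invitation set), the payment rule `p̃(r) = vstar ∅`, `p̄(r) = vstar ∅ - vstar r` is
revenue-maximizing among all IR & SP payment rules: any invitationally-monotone
payments `(pt, pb)` with `pt r' = pb r' + vstar r'` on all `r' ⊆ r` and `pb ∅ ≤ 0`
satisfy `pb r ≤ vstar ∅ - vstar r` and `pt r ≤ vstar ∅`. -/
theorem id_mon_revenue_maximizing {α : Type*}
    (vstar : Finset α → ℝ) (r : Finset α)
    (hID : ∀ r1 r2 : Finset α, r1 ⊆ r2 → r2 ⊆ r → vstar r1 ≤ vstar r2)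
    (pt pb : Finset α → ℝ)
    (hdecomp : ∀ r' : Finset α, r' ⊆ r → pt r' = pb r' + vstar r')
    (hmono : ∀ r1 r2 : Finset α, r1 ⊆ r2 → r2 ⊆ r → pt r2 ≤ pt r1 ∧ pb r2 ≤ pb r1)
    (hIR : pb ∅ ≤ 0) :
    pb r ≤ vstar ∅ - vstar r ∧ pt r ≤ vstar ∅ := by
  have h1 := (hmono ∅ r (Finset.empty_subset r) le_rfl).1
  have h2 := hdecomp ∅ (Finset.empty_subset r)
  have h3 := hdecomp r le_rfl
  constructor <;> linarith
end

section
/- For an IP-MON allocation f, the payment rule p̃(r)=v*(r), p̄(r)=0 is revenue-maximizing: for any payments (p̃', p̄') that are invitationally-monotone, satisfy p̃'(r')−p̄'(r')=v*(r') for all r' ⊆ r, and p̄'(∅) ≤ 0, it holds that p̄'(r) ≤ 0 and p̃'(r) ≤ v*(r). -/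
/-- For an IP-MON allocation (critical bids `vstar` nonincreasing in the
invitation set), the payment rule `p̃(r) = vstar r`, `p̄(r) = 0` is revenue-maximizing:
any invitationally-monotone payments `(pt, pb)` with `pt r' = pb r' + vstar r'` on all
`r' ⊆ r` and `pb ∅ ≤ 0` satisfy `pb r ≤ 0` and `pt r ≤ vstar r`. -/
theorem ip_mon_revenue_maximizing {α : Type*}
    (vstar : Finset α → ℝ) (r : Finset α)
    (hIP : ∀ r1 r2 : Finset α, r1 ⊆ r2 → r2 ⊆ r → vstar r2 ≤ vstar r1)
    (pt pb : Finset α → ℝ)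
    (hdecomp : ∀ r' : Finset α, r' ⊆ r → pt r' = pb r' + vstar r')
    (hmono : ∀ r1 r2 : Finset α, r1 ⊆ r2 → r2 ⊆ r → pt r2 ≤ pt r1 ∧ pb r2 ≤ pb r1)
    (hIR : pb ∅ ≤ 0) :
    pb r ≤ 0 ∧ pt r ≤ vstar r := by
  have h1 : pb r ≤ pb ∅ := (hmono ∅ r (Finset.empty_subset r) (subset_refl r)).2
  have h2 : pb r ≤ 0 := h1.trans hIR
  refine ⟨h2, ?_⟩
  rw [hdecomp r (subset_refl r)]
  linarith
end

section
/- If an allocation rule f satisfies both ID-MON and IP-MON, then for every bidder, every valuation v, and every pair of invitation strategies r' ⊆ r, the allocation is the same: f(v,r') = f(v,r); consequently the critical winning bids are equal: v*(r') = v*(r). -/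
/-- If an allocation rule `f` satisfies both ID-MON and IP-MON, then for
every valuation `v` and invitation strategies `r' ⊆ r` the allocation coincides
(`f v r' ↔ f v r`), and consequently the critical winning bids (infima in `EReal`,
`+∞` when empty) are equal. -/
theorem id_and_ip_mon_allocation_invariant {α : Type*} (f : ℝ → Finset α → Prop)
    (hID : ∀ (v v' : ℝ) (r r' : Finset α), f v r → v ≤ v' → r' ⊆ r → f v' r')
    (hIP : ∀ (v v' : ℝ) (r r' : Finset α), f v r → v ≤ v' → r ⊆ r' → f v' r') :
    ∀ (v : ℝ) (r r' : Finset α), r' ⊆ r →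
      (f v r' ↔ f v r) ∧
      sInf (((↑) : ℝ → EReal) '' {w : ℝ | 0 ≤ w ∧ f w r'}) =
        sInf (((↑) : ℝ → EReal) '' {w : ℝ | 0 ≤ w ∧ f w r}) := by
  intro v r r' hsub
  have hiff : ∀ w : ℝ, f w r' ↔ f w r := fun w =>
    ⟨fun h => hIP w w r' r h le_rfl hsub, fun h => hID w w r r' h le_rfl hsub⟩
  refine ⟨hiff v, ?_⟩
  have : {w : ℝ | 0 ≤ w ∧ f w r'} = {w : ℝ | 0 ≤ w ∧ f w r} := by
    ext w; simp [hiff w]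
  rw [this]
end

section
/- Given an allocation f that is both ID-MON and IP-MON, the mechanism with winning payment v*(r) and losing payment 0 is degenerated: every bidder's utility is independent of the reported invitation set, i.e., for every v, every r' ⊆ r, u((v,r')) = u((v,r)) = f(v,r)·(v − v*(r)). -/
/-- Given an allocation `f` that is both ID-MON and IP-MON (with finite
critical bids `vstar` and `f v r = 1` iff `v ≥ vstar r`), the mechanism with winning
payment `vstar r'` and losing payment `0` is degenerated: for every true type `(v, r)`
and every report `r' ⊆ r`, the utility `f v r' * v - f v r' * vstar r'` equals the
truthful utility, which equals `f v r * (v - vstar r)`. -/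
theorem id_and_ip_mon_degenerated {α : Type*}
    (f : ℝ → Finset α → ℝ) (vstar : Finset α → ℝ)
    (h0 : ∀ r : Finset α, 0 ≤ vstar r)
    (hID : ∀ (v v' : ℝ) (r r' : Finset α), f v r = 1 → v ≤ v' → r' ⊆ r → f v' r' = 1)
    (hIP : ∀ (v v' : ℝ) (r r' : Finset α), f v r = 1 → v ≤ v' → r ⊆ r' → f v' r' = 1)
    (hf : ∀ (v : ℝ) (r : Finset α), f v r = if vstar r ≤ v then 1 else 0) :
    ∀ (v : ℝ) (r r' : Finset α), r' ⊆ r →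
      f v r' * v - f v r' * vstar r' = f v r * v - f v r * vstar r ∧
      f v r * v - f v r * vstar r = f v r * (v - vstar r) := by
  intro v r r' hsub
  have key : vstar r' = vstar r := by
    have h1 : vstar r' ≤ vstar r := by
      have hfr : f (vstar r) r = 1 := by rw [hf]; simp
      have := hID (vstar r) (vstar r) r r' hfr le_rfl hsub
      rw [hf] at this
      by_contra h
      rw [if_neg h] at this
      norm_num at this
    have h2 : vstar r ≤ vstar r' := by
      have hfr : f (vstar r') r' = 1 := by rw [hf]; simp
      have := hIP (vstar r') (vstar r') r' r hfr le_rfl hsub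
      rw [hf] at this
      by_contra h
      rw [if_neg h] at this
      norm_num at this
    linarith
  have hff : f v r' = f v r := by rw [hf, hf, key]
  constructor
  · rw [hff, key]
  · ring
end

section
/- The √k-approximation greedy allocation for single-minded bidders is value-monotone: if bidder i wins with bid v_i, she also wins with any bid v' ≥ v_i, all else fixed. -/
/-- Greedy single-minded allocation: process bidders in the given list order,
granting bidder `j` her bundle `S j` iff it is disjoint from the set of already
used items. Returns the set of granted (winning) bidders. -/
def greedyWinners {ι : Type*} [DecidableEq ι] (S : ι → Finset ℕ) :
    List ι → Finset ℕ → Finset ι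
  | [], _ => ∅
  | j :: rest, used =>
      if Disjoint (S j) used then insert j (greedyWinners S rest (used ∪ S j))
      else greedyWinners S rest used

/-- `L` is a valid greedy order of all bidders for bids `v`: it lists every bidder
exactly once, sorted by nonincreasing score `v j / √|S j|`, with ties broken by a
fixed injective priority `π`. -/
def sortedOrder {ι : Type*} [Fintype ι] (S : ι → Finset ℕ) (π : ι → ℕ)
    (v : ι → ℝ) (L : List ι) : Prop :=
  L.Nodup ∧ (∀ j : ι, j ∈ L) ∧
    L.Pairwise (fun a b =>
      v b / Real.sqrt ((S b).card) < v a / Real.sqrt ((S a).card) ∨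
        (v a / Real.sqrt ((S a).card) = v b / Real.sqrt ((S b).card) ∧ π a < π b))

/-!
A greedy order is a list sorted strictly decreasingly by the key `(score, priority)`, so the
bidders before `i` are exactly those with a larger key than `i`, in decreasing key order.
Raising `v i` raises the key of `i` and leaves every other key alone; hence the new
predecessors of `i` are the bidders whose key exceeds a larger threshold, listed in the same
order, i.e. a prefix of the old predecessors. The items the greedy scan has used up grow
along prefixes, so if `S i` was disjoint from them before, it still is.
-/

open List

section

variable {ι : Type*}

section Greedy

variable (S : ι → Finset ℕ)

def greedyUsed : List ι → Finset ℕ → Finset ℕ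
  | [], used => used
  | j :: rest, used =>
      if Disjoint (S j) used then greedyUsed rest (used ∪ S j) else greedyUsed rest used

theorem subset_greedyUsed (l : List ι) (used : Finset ℕ) : used ⊆ greedyUsed S l used := by
  induction l generalizing used with
  | nil => exact subset_rfl
  | cons j rest ih =>
    rw [greedyUsed]
    split
    · exact Finset.subset_union_left.trans (ih _)
    · exact ih _

theorem greedyUsed_append (l₁ l₂ : List ι) (used : Finset ℕ) :
    greedyUsed S (l₁ ++ l₂) used = greedyUsed S l₂ (greedyUsed S l₁ used) := by
  induction l₁ generalizing used with
  | nil => rfl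
  | cons j rest ih =>
    simp only [cons_append, greedyUsed]
    split <;> apply ih

theorem greedyUsed_subset_of_prefix {l₁ l₂ : List ι} (h : l₁ <+: l₂) (used : Finset ℕ) :
    greedyUsed S l₁ used ⊆ greedyUsed S l₂ used := by
  obtain ⟨t, rfl⟩ := h
  rw [greedyUsed_append]
  exact subset_greedyUsed S t _

variable [DecidableEq ι]

theorem greedyWinners_subset_toFinset (l : List ι) (used : Finset ℕ) :
    greedyWinners S l used ⊆ l.toFinset := by
  induction l generalizing used with
  | nil => simp [greedyWinners]
  | cons j rest ih =>
    rw [greedyWinners, toFinset_cons]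
    split
    · exact Finset.insert_subset_insert j (ih _)
    · exact (ih _).trans (Finset.subset_insert j _)

theorem mem_greedyWinners_append_cons_iff {P Q : List ι} {i : ι} (h : (P ++ i :: Q).Nodup)
    (used : Finset ℕ) :
    i ∈ greedyWinners S (P ++ i :: Q) used ↔ Disjoint (S i) (greedyUsed S P used) := by
  obtain ⟨hP, hQ⟩ : i ∉ P ∧ i ∉ Q := by simpa using (nodup_cons.mp (nodup_middle.mp h)).1
  clear h
  induction P generalizing used with
  | nil =>
    have hQ' : ∀ u, i ∉ greedyWinners S Q u := fun u hi ↦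
      hQ (mem_toFinset.mp (greedyWinners_subset_toFinset S Q u hi))
    by_cases hdisj : Disjoint (S i) used <;> simp [greedyWinners, greedyUsed, hdisj, hQ']
  | cons j rest ih =>
    obtain ⟨hij, hrest⟩ := not_or.mp (mem_cons.not.mp hP)
    simp only [cons_append, greedyWinners, greedyUsed]
    split
    · rw [Finset.mem_insert, or_iff_right hij, ih _ hrest]
    · exact ih _ hrest

end Greedy

section SortedByKey

variable {α : Type*} [LinearOrder α] {key : ι → α}

theorem filter_eq_of_pairwise_append_cons {P Q : List ι} {i : ι}
    (h : (P ++ i :: Q).Pairwise (fun a b ↦ key b < key a)) :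
    (P ++ i :: Q).filter (fun j ↦ key i < key j) = P := by
  obtain ⟨hP, hQ, hPQ⟩ := pairwise_append.mp h
  rw [filter_append, filter_eq_self.mpr, filter_cons_of_neg, filter_eq_nil_iff.mpr, append_nil]
  · exact fun j hj ↦ by simpa using ((pairwise_cons.mp hQ).1 j hj).le
  · simp
  · exact fun j hj ↦ by simpa using hPQ j hj i mem_cons_self

theorem filter_prefix_filter_of_pairwise {l : List ι}
    (h : l.Pairwise (fun a b ↦ key b < key a)) {c c' : α} (hc : c ≤ c') :
    l.filter (fun j ↦ c' < key j) <+: l.filter (fun j ↦ c < key j) := by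
  induction l with
  | nil => exact prefix_rfl
  | cons a t ih =>
    obtain ⟨ha, ht⟩ := pairwise_cons.mp h
    by_cases hc'a : c' < key a
    · rw [filter_cons_of_pos (by simpa using hc'a),
        filter_cons_of_pos (by simpa using hc.trans_lt hc'a)]
      exact (prefix_cons_inj a).mpr (ih ht)
    · -- every later key lies below `key a ≤ c'`
      rw [filter_cons_of_neg (by simpa using hc'a), filter_eq_nil_iff.mpr]
      · exact nil_prefix
      · exact fun j hj ↦ by simpa using ((ha j hj).trans_le (not_lt.mp hc'a)).le

theorem prefix_of_pairwise_of_le_key {key' : ι → α} {i : ι} (hi : key i ≤ key' i)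
    (hkey : ∀ j ≠ i, key' j = key j) {P Q P' Q' : List ι}
    (hL : (P ++ i :: Q).Pairwise (fun a b ↦ key b < key a))
    (hL' : (P' ++ i :: Q').Pairwise (fun a b ↦ key' b < key' a))
    (hmem : ∀ j, j ∈ P ++ i :: Q) (hmem' : ∀ j, j ∈ P' ++ i :: Q') :
    P' <+: P := by
  have hthreshold : ∀ j, key' i < key' j ↔ key' i < key j := fun j ↦ by
    by_cases hj : j = i
    · subst hj
      exact iff_of_false (lt_irrefl _) (not_lt.mpr hi)
    · rw [hkey j hj]
  have hsorted : ((P' ++ i :: Q').filter (fun j ↦ key' i < key' j)).Pairwise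
      (fun a b ↦ key b < key a) := by
    refine (hL'.filter _).imp_of_mem fun {a b} ha hb hab ↦ ?_
    have hne : ∀ {j}, j ∈ (P' ++ i :: Q').filter (fun j ↦ key' i < key' j) → j ≠ i :=
      fun hj hji ↦ by subst hji; simp at hj
    rwa [hkey a (hne ha), hkey b (hne hb)] at hab
  calc P' = (P' ++ i :: Q').filter (fun j ↦ key' i < key' j) :=
        (filter_eq_of_pairwise_append_cons hL').symm
    _ = (P ++ i :: Q).filter (fun j ↦ key' i < key j) :=
        hsorted.eq_of_mem_iff (hL.filter _) fun j ↦ by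
          simp only [mem_filter, hmem, hmem', hthreshold, true_and]
    _ <+: (P ++ i :: Q).filter (fun j ↦ key i < key j) := filter_prefix_filter_of_pairwise hL hi
    _ = P := filter_eq_of_pairwise_append_cons hL

end SortedByKey

section BidKey

variable (S : ι → Finset ℕ) (π : ι → ℕ) (v : ι → ℝ)

/-- Dualising the priority makes a smaller `π` a larger key, as the tie-break requires. -/
noncomputable def bidKey (j : ι) : ℝ ×ₗ ℕᵒᵈ :=
  toLex (v j / Real.sqrt (S j).card, OrderDual.toDual (π j))

theorem sortedOrder_iff [Fintype ι] (L : List ι) :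
    sortedOrder S π v L ↔ L.Nodup ∧ (∀ j, j ∈ L) ∧
      L.Pairwise (fun a b ↦ bidKey S π v b < bidKey S π v a) := by
  simp only [sortedOrder, bidKey, Prod.Lex.toLex_lt_toLex, OrderDual.toDual_lt_toDual, eq_comm]

variable [DecidableEq ι]

theorem bidKey_update_of_ne {i j : ι} (v' : ℝ) (hj : j ≠ i) :
    bidKey S π (Function.update v i v') j = bidKey S π v j := by
  rw [bidKey, bidKey, Function.update_of_ne hj]

theorem bidKey_le_bidKey_update (i : ι) {v' : ℝ} (hv' : v i ≤ v') :
    bidKey S π v i ≤ bidKey S π (Function.update v i v') i := by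
  rw [bidKey, bidKey, Function.update_self]
  exact Prod.Lex.toLex_mono ⟨div_le_div_of_nonneg_right hv' (Real.sqrt_nonneg _), le_rfl⟩

end BidKey

end

theorem greedy_value_monotone_general {ι : Type*} [Fintype ι] [DecidableEq ι]
    (S : ι → Finset ℕ) (π : ι → ℕ)
    (v : ι → ℝ) (i : ι) (v' : ℝ) (hv' : v i ≤ v')
    (L L' : List ι)
    (hL : sortedOrder S π v L)
    (hL' : sortedOrder S π (Function.update v i v') L')
    (hwin : i ∈ greedyWinners S L ∅) :
    i ∈ greedyWinners S L' ∅ := by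
  obtain ⟨hnodup, hmem, hsorted⟩ := (sortedOrder_iff S π v L).mp hL
  obtain ⟨hnodup', hmem', hsorted'⟩ := (sortedOrder_iff S π _ L').mp hL'
  obtain ⟨P, Q, rfl⟩ := append_of_mem (hmem i)
  obtain ⟨P', Q', rfl⟩ := append_of_mem (hmem' i)
  rw [mem_greedyWinners_append_cons_iff S hnodup] at hwin
  rw [mem_greedyWinners_append_cons_iff S hnodup']
  have hprefix : P' <+: P :=
    prefix_of_pairwise_of_le_key (bidKey_le_bidKey_update S π v i hv')
      (fun j hj ↦ bidKey_update_of_ne S π v v' hj) hsorted hsorted' hmem hmem'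
  exact hwin.mono_right (greedyUsed_subset_of_prefix S hprefix ∅)

/-- The √k-approximation greedy allocation for single-minded bidders is
value-monotone: if bidder `i` wins with bid `v i`, she also wins with any bid
`v' ≥ v i`, all else fixed. -/
theorem greedy_value_monotone {ι : Type*} [Fintype ι] [DecidableEq ι]
    (S : ι → Finset ℕ) (π : ι → ℕ) (hπ : Function.Injective π)
    (v : ι → ℝ) (i : ι) (v' : ℝ) (hv' : v i ≤ v')
    (L L' : List ι)
    (hL : sortedOrder S π v L)
    (hL' : sortedOrder S π (Function.update v i v') L')
    (hwin : i ∈ greedyWinners S L ∅) :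
    i ∈ greedyWinners S L' ∅ :=
  greedy_value_monotone_general S π v i v' hv' L L' hL hL' hwin
end

section
/- Under IP-MON with revenue-maximizing payments, truth-telling in the invitation dimension weakly dominates: for every true type (v,r) and every r' ⊆ r, f(v,r)·(v − v*(r)) ≥ f(v,r')·(v − v*(r')). -/
/-- Under IP-MON (critical bids `vstar` nonincreasing in the invitation
set, `f v r' = 1` iff `v ≥ vstar r'`) with the revenue-maximizing payments (winners
pay `vstar r'`, losers pay `0`), truth-telling in the invitation dimension weakly
dominates: for every true type `(v, r)` and every `r' ⊆ r`,
`f v r' * (v - vstar r') ≤ f v r * (v - vstar r)`. -/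
theorem ip_mon_invitation_truthful {α : Type*}
    (vstar : Finset α → ℝ) (h0 : ∀ r : Finset α, 0 ≤ vstar r)
    (hIP : ∀ r1 r2 : Finset α, r1 ⊆ r2 → vstar r2 ≤ vstar r1)
    (f : ℝ → Finset α → ℝ)
    (hf : ∀ (v : ℝ) (r' : Finset α), f v r' = if vstar r' ≤ v then 1 else 0) :
    ∀ (v : ℝ) (r r' : Finset α), r' ⊆ r →
      f v r' * (v - vstar r') ≤ f v r * (v - vstar r) := by
  intro v r r' hsub
  rw [hf, hf]
  have h := hIP r' r hsub
  by_cases h1 : vstar r' ≤ v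
  · have h2 : vstar r ≤ v := le_trans h h1
    simp [h1, h2]; linarith
  · by_cases h2 : vstar r ≤ v
    · simp [h1, h2]
    · simp [h1, h2]
end

section
/- Under ID-MON with revenue-maximizing payments, truth-telling in the invitation dimension weakly dominates: for every true type (v,r) and every r' ⊆ r, u(r) ≥ u(r'), where u(r') = f(v,r')·v − [f(v,r')·v*(∅) + (1 − f(v,r'))·(v*(∅) − v*(r'))] ; moreover u(r) = v − v*(∅) + (1 − f(v,r))·(v*(r) − v) ≥ v − v*(∅) always, with equality when the bidder wins. -/
/-- Under ID-MON (critical bids `vstar` nondecreasing in the invitation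
set, `f v r' = 1` iff `v ≥ vstar r'`) with the revenue-maximizing payments (winners
pay `vstar ∅`; losers pay `vstar ∅ - vstar r'`), truth-telling in the invitation
dimension weakly dominates: with utility
`u r' = f v r' * v - (f v r' * vstar ∅ + (1 - f v r') * (vstar ∅ - vstar r'))`,
we have `u r' ≤ u r` for all `r' ⊆ r`; moreover
`u r = v - vstar ∅ + (1 - f v r) * (vstar r - v) ≥ v - vstar ∅`,
with equality when the bidder wins. -/
theorem id_mon_invitation_truthful {α : Type*}
    (vstar : Finset α → ℝ) (h0 : ∀ r : Finset α, 0 ≤ vstar r)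
    (hID : ∀ r1 r2 : Finset α, r1 ⊆ r2 → vstar r1 ≤ vstar r2)
    (f : ℝ → Finset α → ℝ)
    (hf : ∀ (v : ℝ) (r' : Finset α), f v r' = if vstar r' ≤ v then 1 else 0)
    (u : ℝ → Finset α → ℝ)
    (hu : ∀ (v : ℝ) (r' : Finset α),
      u v r' = f v r' * v -
        (f v r' * vstar ∅ + (1 - f v r') * (vstar ∅ - vstar r'))) :
    ∀ (v : ℝ) (r : Finset α),
      (∀ r' : Finset α, r' ⊆ r → u v r' ≤ u v r) ∧
      u v r = v - vstar ∅ + (1 - f v r) * (vstar r - v) ∧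
      v - vstar ∅ ≤ u v r ∧
      (f v r = 1 → u v r = v - vstar ∅) := by
  have key : ∀ (v : ℝ) (s : Finset α),
      u v s = if vstar s ≤ v then v - vstar ∅ else vstar s - vstar ∅ := by
    intro v s
    rw [hu, hf]
    split <;> ring
  intro v r
  refine ⟨?_, ?_, ?_, ?_⟩
  · intro r' hsub
    rw [key, key]
    have hmono := hID r' r hsub
    split <;> split <;> linarith
  · rw [key, hf]
    split <;> ring
  · rw [key]; split <;> linarith
  · intro hfr
    rw [hf] at hfr
    rw [key]
    split
    · rfl
    · simp_all
end

section
/- Any mechanism whose payment can be decomposed as p̃(r') = g̃(r') + h and p̄(r') = ḡ(r') + h, where g̃(r') − ḡ(r') = v*(r') for all r' ⊆ r, and where the full set r minimizes both g̃ and ḡ over subsets of r, is strategyproof for the invitation dimension given truthful bidding: for all r' ⊆ r, the bidder's utility from reporting r (with true value v) is at least her utility from reporting r'. -/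
/-- Any mechanism whose payments decompose as
`p̃(r') = g̃(r') + h` (winning) and `p̄(r') = ḡ(r') + h` (losing), where
`g̃(r') - ḡ(r') = vstar r'` for all `r' ⊆ r` and the full set `r` minimizes both
`g̃` and `ḡ` over subsets of `r`, is strategyproof in the invitation dimension
given truthful bidding: reporting `r` yields utility at least that of any `r' ⊆ r`. -/
theorem payment_decomposition_invitation_sp {α : Type*}
    (vstar : Finset α → ℝ) (h0 : ∀ r' : Finset α, 0 ≤ vstar r')
    (f : ℝ → Finset α → ℝ)
    (hf : ∀ (v : ℝ) (r' : Finset α), f v r' = if vstar r' ≤ v then 1 else 0)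
    (gt gb : Finset α → ℝ) (h : ℝ) (r : Finset α)
    (hdecomp : ∀ r' : Finset α, r' ⊆ r → gt r' - gb r' = vstar r')
    (hmin : ∀ r' : Finset α, r' ⊆ r → gt r ≤ gt r' ∧ gb r ≤ gb r')
    (u : ℝ → Finset α → ℝ)
    (hu : ∀ (v : ℝ) (r' : Finset α),
      u v r' = f v r' * v -
        (f v r' * (gt r' + h) + (1 - f v r') * (gb r' + h))) :
    ∀ (v : ℝ) (r' : Finset α), r' ⊆ r → u v r' ≤ u v r := by
  intro v r' hsub
  have hd1 := hdecomp r' hsub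
  have hd2 := hdecomp r (subset_refl r)
  have hm := hmin r' hsub
  rw [hu, hu, hf, hf]
  rcases le_or_gt (vstar r') v with h1 | h1 <;>
    rcases le_or_gt (vstar r) v with h2 | h2 <;>
    simp [h1, h2, not_le.mpr] <;>
    [linarith [hm.1]; linarith [hm.1, hm.2]; linarith [hm.2]; linarith [hm.2]]
end
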